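/- Let G be a finite simple graph with no isolated vertex. If D is the unique minimum paired-dominating set of G, then every minimum ev-dominating set M of G satisfies V_G(M) = D. -/

import Mathlib

/-!
Every edge `g` of a minimum ev-dominating set `M` privately ev-dominates some vertex `y`. If `g`
meets another edge of `M`, then `y ∉ V(M)` and `y` hangs off the endpoint `b` of `g` that no other
edge of `M` contains, so `g` can be traded for `s(b, y)`. Trading every edge outside a maximal
matching `K ⊆ M` gives a matching with at most `|M|` edges covering `V(M)`. Its vertex set is
paired-dominating of size at most `2 γ_ev(G)`, while the perfect matching of any paired-dominating
set is ev-dominating, so `2 γ_ev(G) ≤ γ_pr(G)` and that vertex set is a minimum paired-dominating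
set. If two edges `g, h` of `M` met, the choices `g ∈ K` and `h ∈ K` would give two minimum
paired-dominating sets differing at the private neighbour of `g`. Hence `M` is a matching and
`V(M)` is itself the unique minimum paired-dominating set.
-/

open SimpleGraph

variable {V : Type*}

/-- `D` is a dominating set of `G`: every vertex outside `D` has a neighbor in `D`. -/
def IsDomSet (G : SimpleGraph V) (D : Set V) : Prop :=
  ∀ v ∉ D, ∃ u ∈ D, G.Adj u v

/-- The edge `e` ev-dominates the vertex `v`: `e` is incident to `v` or to a neighbor of `v`. -/
def EvDom (G : SimpleGraph V) (e : Sym2 V) (v : V) : Prop :=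
  v ∈ e ∨ ∃ u ∈ e, G.Adj u v

/-- `M` is an edge-vertex dominating set of `G`. -/
def IsEvDomSet (G : SimpleGraph V) (M : Set (Sym2 V)) : Prop :=
  M ⊆ G.edgeSet ∧ ∀ v : V, ∃ e ∈ M, EvDom G e v

/-- `M` is a minimum edge-vertex dominating set of `G`. -/
def IsMinEvDomSet (G : SimpleGraph V) (M : Set (Sym2 V)) : Prop :=
  IsEvDomSet G M ∧ ∀ M' : Set (Sym2 V), IsEvDomSet G M' → M.ncard ≤ M'.ncard

/-- The edge-vertex domination number `γ_ev(G)`. -/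
noncomputable def evNum (G : SimpleGraph V) : ℕ :=
  sInf {n | ∃ M : Set (Sym2 V), IsEvDomSet G M ∧ M.ncard = n}

/-- The set of all endpoints of edges in `M`. -/
def edgeVerts (M : Set (Sym2 V)) : Set V := {v | ∃ e ∈ M, v ∈ e}

/-- `M` is a perfect matching of the induced subgraph `G[D]`: a set of edges of `G`
with all endpoints in `D`, such that every vertex of `D` lies in exactly one edge of `M`. -/
def IsPMOn (G : SimpleGraph V) (D : Set V) (M : Set (Sym2 V)) : Prop :=
  M ⊆ G.edgeSet ∧ (∀ e ∈ M, ∀ v ∈ e, v ∈ D) ∧ ∀ v ∈ D, ∃! e, e ∈ M ∧ v ∈ e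

/-- `D` is a paired-dominating set of `G`. -/
def IsPairedDomSet (G : SimpleGraph V) (D : Set V) : Prop :=
  IsDomSet G D ∧ ∃ M : Set (Sym2 V), IsPMOn G D M

/-- `D` is a minimum paired-dominating set of `G`. -/
def IsMinPairedDomSet (G : SimpleGraph V) (D : Set V) : Prop :=
  IsPairedDomSet G D ∧ ∀ D' : Set V, IsPairedDomSet G D' → D.ncard ≤ D'.ncard

/-- The paired-domination number `γ_pr(G)`. -/
noncomputable def prNum (G : SimpleGraph V) : ℕ :=
  sInf {n | ∃ D : Set V, IsPairedDomSet G D ∧ D.ncard = n}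

/-- No two distinct edges of `M` share a vertex. -/
def NoSharedVertex (M : Set (Sym2 V)) : Prop :=
  ∀ e ∈ M, ∀ f ∈ M, e ≠ f → ∀ v : V, v ∈ e → v ∉ f

/-- `G` has no isolated vertex. -/
def NoIsolated (G : SimpleGraph V) : Prop := ∀ v : V, ∃ u, G.Adj u v

section Counting

variable {G : SimpleGraph V} {N : Set (Sym2 V)}

lemma edgeVerts_eq_biUnion (N : Set (Sym2 V)) : edgeVerts N = ⋃ e ∈ N, {v | v ∈ e} := by
  ext v
  simp [edgeVerts]

lemma ncard_edgeVerts_of_noSharedVertex [Finite V] (hN : N ⊆ G.edgeSet)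
    (hmatch : NoSharedVertex N) : (edgeVerts N).ncard = 2 * N.ncard := by
  classical
  have hdisj : N.PairwiseDisjoint (fun e => {v | v ∈ e}) := fun e he f hf hne =>
    Set.disjoint_left.2 (hmatch e he f hf hne)
  have htwo : ∀ e ∈ N, {v | v ∈ e}.ncard = 2 * 1 := fun e he => by
    rw [show {v | v ∈ e} = (e.toFinset : Set V) by ext; simp [Sym2.mem_toFinset],
      Set.ncard_coe_finset,
      Sym2.card_toFinset_of_not_isDiag e (G.not_isDiag_of_mem_edgeSet (hN he))]
  rw [edgeVerts_eq_biUnion, Set.Finite.ncard_biUnion N.toFinite (fun _ _ => Set.toFinite _) hdisj,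
    finsum_mem_congr rfl htwo, ← mul_finsum_mem, finsum_one]

end Counting

section PairedDomination

variable {G : SimpleGraph V} {M N : Set (Sym2 V)} {D : Set V}

lemma IsEvDomSet.isDomSet_of_edgeVerts_subset (hM : IsEvDomSet G M) (h : edgeVerts M ⊆ D) :
    IsDomSet G D := by
  intro v hv
  obtain ⟨e, he, hev⟩ := hM.2 v
  rcases hev with hve | ⟨u, hue, huv⟩
  · exact absurd (h ⟨e, he, hve⟩) hv
  · exact ⟨u, h ⟨e, he, hue⟩, huv⟩

lemma IsPMOn.edgeVerts_eq (h : IsPMOn G D N) : edgeVerts N = D := by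
  ext v
  refine ⟨fun ⟨e, he, hv⟩ => h.2.1 e he v hv, fun hv => ?_⟩
  obtain ⟨e, ⟨he, hve⟩, -⟩ := h.2.2 v hv
  exact ⟨e, he, hve⟩

lemma IsPMOn.noSharedVertex (h : IsPMOn G D N) : NoSharedVertex N := by
  intro e he f hf hne v hve hvf
  obtain ⟨_, -, huniq⟩ := h.2.2 v (h.2.1 e he v hve)
  exact hne ((huniq e ⟨he, hve⟩).trans (huniq f ⟨hf, hvf⟩).symm)

lemma IsPMOn.isEvDomSet (h : IsPMOn G D N) (hD : IsDomSet G D) : IsEvDomSet G N := by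
  refine ⟨h.1, fun v => ?_⟩
  by_cases hv : v ∈ D
  · obtain ⟨e, ⟨he, hve⟩, -⟩ := h.2.2 v hv
    exact ⟨e, he, Or.inl hve⟩
  · obtain ⟨u, hu, huv⟩ := hD v hv
    obtain ⟨e, ⟨he, hue⟩, -⟩ := h.2.2 u hu
    exact ⟨e, he, Or.inr ⟨u, hue, huv⟩⟩

lemma isPairedDomSet_edgeVerts (hN : N ⊆ G.edgeSet) (hmatch : NoSharedVertex N)
    (hdom : IsDomSet G (edgeVerts N)) : IsPairedDomSet G (edgeVerts N) := by
  refine ⟨hdom, N, hN, fun e he v hv => ⟨e, he, hv⟩, ?_⟩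
  rintro v ⟨e, he, hve⟩
  exact ⟨e, ⟨he, hve⟩, fun f ⟨hf, hvf⟩ =>
    by_contra fun hne => hmatch f hf e he hne v hvf hve⟩

lemma IsPairedDomSet.exists_isEvDomSet [Finite V] (h : IsPairedDomSet G D) :
    ∃ N, IsEvDomSet G N ∧ D.ncard = 2 * N.ncard := by
  obtain ⟨hD, N, hN⟩ := h
  refine ⟨N, hN.isEvDomSet hD, ?_⟩
  rw [← hN.edgeVerts_eq, ncard_edgeVerts_of_noSharedVertex hN.1 hN.noSharedVertex]

lemma IsMinEvDomSet.isMinPairedDomSet_edgeVerts [Finite V] (hM : IsMinEvDomSet G M)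
    (hN : N ⊆ G.edgeSet) (hmatch : NoSharedVertex N) (hcard : N.ncard ≤ M.ncard)
    (hcover : edgeVerts M ⊆ edgeVerts N) : IsMinPairedDomSet G (edgeVerts N) := by
  refine ⟨isPairedDomSet_edgeVerts hN hmatch (hM.1.isDomSet_of_edgeVerts_subset hcover),
    fun D' hD' => ?_⟩
  obtain ⟨N', hN', hD'card⟩ := hD'.exists_isEvDomSet
  rw [ncard_edgeVerts_of_noSharedVertex hN hmatch, hD'card]
  have := hM.2 N' hN'
  omega

end PairedDomination

section Matching

variable {M K : Set (Sym2 V)}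

def IsMatchingIn (M K : Set (Sym2 V)) : Prop := K ⊆ M ∧ NoSharedVertex K

lemma exists_mem_of_maximal_isMatchingIn
    (hK : Maximal (IsMatchingIn M) K) {f : Sym2 V} (hf : f ∈ M)
    (hfK : f ∉ K) : ∃ k ∈ K, ∃ v ∈ f, v ∈ k := by
  by_contra! hfree
  have hins : IsMatchingIn M (insert f K) := by
    refine ⟨Set.insert_subset hf hK.1.1, ?_⟩
    rintro e (rfl | he) e' (rfl | he') hne v hve hve'
    · exact hne rfl
    · exact hfree e' he' v hve hve'
    · exact hfree e he v hve' hve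
    · exact hK.1.2 e he e' he' hne v hve hve'
  exact hfK (hK.2 hins (Set.subset_insert f K) (Set.mem_insert f K))

lemma exists_maximal_isMatchingIn_mem [Finite V] {g : Sym2 V} (hg : g ∈ M) :
    ∃ K, g ∈ K ∧ Maximal (IsMatchingIn M) K := by
  have hsingle : IsMatchingIn M {g} := by
    refine ⟨Set.singleton_subset_iff.2 hg, fun e he f hf hne => absurd ?_ hne⟩
    rw [Set.mem_singleton_iff.1 he, Set.mem_singleton_iff.1 hf]
  obtain ⟨K, hgK, hK⟩ := Finite.exists_le_maximal (p := IsMatchingIn M) hsingle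
  exact ⟨K, hgK rfl, hK⟩

end Matching

section Swap

variable {G : SimpleGraph V} {M K : Set (Sym2 V)}

structure IsPrivateNbr (G : SimpleGraph V) (M : Set (Sym2 V)) (g : Sym2 V) (b y : V) : Prop where
  mem : b ∈ g
  notMem_of_ne : ∀ h ∈ M, h ≠ g → b ∉ h
  adj : G.Adj b y
  notMem_edgeVerts : y ∉ edgeVerts M
  not_evDom_of_ne : ∀ h ∈ M, h ≠ g → ¬EvDom G h y

lemma IsPrivateNbr.evDom {g : Sym2 V} {b y : V} (h : IsPrivateNbr G M g b y) : EvDom G g y :=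
  Or.inr ⟨b, h.mem, h.adj⟩

lemma IsMinEvDomSet.exists_private [Finite V] (hM : IsMinEvDomSet G M) {g : Sym2 V}
    (hg : g ∈ M) : ∃ y, EvDom G g y ∧ ∀ h ∈ M, h ≠ g → ¬EvDom G h y := by
  by_contra! hcon
  have hsmaller : IsEvDomSet G (M \ {g}) := by
    refine ⟨fun e he => hM.1.1 he.1, fun v => ?_⟩
    obtain ⟨e, he, hev⟩ := hM.1.2 v
    by_cases heg : e = g
    · obtain ⟨h, hh, hhg, hhv⟩ := hcon v (heg ▸ hev)
      exact ⟨h, ⟨hh, hhg⟩, hhv⟩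
    · exact ⟨e, ⟨he, heg⟩, hev⟩
  exact (hM.2 _ hsmaller).not_gt (Set.ncard_sdiff_singleton_lt_of_mem hg M.toFinite)

lemma IsMinEvDomSet.exists_isPrivateNbr [Finite V] (hM : IsMinEvDomSet G M) {g h : Sym2 V}
    (hg : g ∈ M) (hh : h ∈ M) (hne : h ≠ g) {v : V} (hvg : v ∈ g) (hvh : v ∈ h) :
    ∃ b y, IsPrivateNbr G M g b y := by
  obtain ⟨y, hgy, hpriv⟩ := hM.exists_private hg
  -- `h` ev-dominates both endpoints of `g` through `v`
  have hyg : y ∉ g := by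
    intro hyg
    by_cases hvy : v = y
    · exact hpriv h hh hne (Or.inl (hvy ▸ hvh))
    · have hadj : G.Adj v y := by
        rw [← SimpleGraph.mem_edgeSet, ← (Sym2.mem_and_mem_iff hvy).1 ⟨hvg, hyg⟩]
        exact hM.1.1 hg
      exact hpriv h hh hne (Or.inr ⟨v, hvh, hadj⟩)
  obtain ⟨b, hbg, hby⟩ := hgy.resolve_left hyg
  refine ⟨b, y, hbg, fun h' hh' hne' hbh' => hpriv h' hh' hne' (Or.inr ⟨b, hbh', hby⟩), hby,
    ?_, hpriv⟩
  rintro ⟨e, he, hye⟩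
  by_cases heg : e = g
  · exact hyg (heg ▸ hye)
  · exact hpriv e he heg (Or.inl hye)

lemma IsMinEvDomSet.exists_isPrivateNbr_fun [Finite V] (hM : IsMinEvDomSet G M) :
    ∃ b y : Sym2 V → V, ∀ K, Maximal (IsMatchingIn M) K →
      ∀ g ∈ M \ K, IsPrivateNbr G M g (b g) (y g) := by
  obtain hV | hV := isEmpty_or_nonempty V
  · exact ⟨isEmptyElim, isEmptyElim, fun _ _ g => isEmptyElim g⟩
  choose! b y hby using fun g (hg : g ∈ M) (hs : ∃ k ∈ M, k ≠ g ∧ ∃ v ∈ g, v ∈ k) =>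
    let ⟨_, hk, hne, _, hvg, hvk⟩ := hs
    hM.exists_isPrivateNbr hg hk hne hvg hvk
  refine ⟨b, y, fun K hK g ⟨hg, hgK⟩ => hby g hg ?_⟩
  obtain ⟨k, hk, v, hvg, hvk⟩ := exists_mem_of_maximal_isMatchingIn hK hg hgK
  exact ⟨k, hK.1.1 hk, fun h => hgK (h ▸ hk), v, hvg, hvk⟩

def swapMatching (K M : Set (Sym2 V)) (b y : Sym2 V → V) : Set (Sym2 V) :=
  K ∪ (fun g => s(b g, y g)) '' (M \ K)

variable {b y : Sym2 V → V}

lemma swapMatching_subset_edgeSet (hM : M ⊆ G.edgeSet) (hKM : K ⊆ M)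
    (hby : ∀ g ∈ M \ K, IsPrivateNbr G M g (b g) (y g)) :
    swapMatching K M b y ⊆ G.edgeSet := by
  rintro e (he | ⟨g, hg, rfl⟩)
  · exact hM (hKM he)
  · exact (hby g hg).adj

lemma ncard_swapMatching_le [Finite V] (hKM : K ⊆ M) :
    (swapMatching K M b y).ncard ≤ M.ncard :=
  calc (swapMatching K M b y).ncard
      ≤ K.ncard + ((fun g => s(b g, y g)) '' (M \ K)).ncard := Set.ncard_union_le _ _
    _ ≤ K.ncard + (M \ K).ncard := Nat.add_le_add_left (Set.ncard_image_le (Set.toFinite _)) _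
    _ = M.ncard := by rw [add_comm, Set.ncard_sdiff_add_ncard_of_subset hKM]

lemma eq_of_mem_swapMatching (hKM : K ⊆ M) (hby : ∀ g ∈ M \ K, IsPrivateNbr G M g (b g) (y g))
    {g f : Sym2 V} (hg : g ∈ M \ K) (hf : f ∈ swapMatching K M b y) {v : V}
    (hvg : v ∈ s(b g, y g)) (hvf : v ∈ f) : f = s(b g, y g) := by
  have hgy := hby g hg
  rcases hf with hfK | ⟨g', hg', rfl⟩
  · have hfg : f ≠ g := fun h => hg.2 (h ▸ hfK)
    rcases Sym2.mem_iff.1 hvg with rfl | rfl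
    · exact absurd hvf (hgy.notMem_of_ne f (hKM hfK) hfg)
    · exact absurd ⟨f, hKM hfK, hvf⟩ hgy.notMem_edgeVerts
  · by_cases hgg : g' = g
    · rw [hgg]
    have hgy' := hby g' hg'
    exfalso
    rcases Sym2.mem_iff.1 hvg with rfl | rfl <;> rcases Sym2.mem_iff.1 hvf with h | h
    · exact hgy.notMem_of_ne g' hg'.1 hgg (h ▸ hgy'.mem)
    · exact hgy'.notMem_edgeVerts ⟨g, hg.1, h ▸ hgy.mem⟩
    · exact hgy.notMem_edgeVerts ⟨g', hg'.1, h ▸ hgy'.mem⟩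
    · exact hgy.not_evDom_of_ne g' hg'.1 hgg (h ▸ hgy'.evDom)

lemma noSharedVertex_swapMatching (hKM : K ⊆ M) (hK : NoSharedVertex K)
    (hby : ∀ g ∈ M \ K, IsPrivateNbr G M g (b g) (y g)) :
    NoSharedVertex (swapMatching K M b y) := by
  intro e he f hf hne v hve hvf
  rcases he with heK | ⟨g, hg, rfl⟩
  · rcases hf with hfK | ⟨g, hg, rfl⟩
    · exact hK e heK f hfK hne v hve hvf
    · exact hne (eq_of_mem_swapMatching hKM hby hg (Or.inl heK) hvf hve)
  · exact hne (eq_of_mem_swapMatching hKM hby hg hf hve hvf).symm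

lemma edgeVerts_subset_swapMatching (hK : Maximal (IsMatchingIn M) K)
    (hby : ∀ g ∈ M \ K, IsPrivateNbr G M g (b g) (y g)) :
    edgeVerts M ⊆ edgeVerts (swapMatching K M b y) := by
  rintro v ⟨g, hg, hvg⟩
  by_cases hgK : g ∈ K
  · exact ⟨g, Or.inl hgK, hvg⟩
  obtain ⟨k, hk, w, hwg, hwk⟩ := exists_mem_of_maximal_isMatchingIn hK hg hgK
  have hgy := hby g ⟨hg, hgK⟩
  have hwb : w ≠ b g := fun h =>
    hgy.notMem_of_ne k (hK.1.1 hk) (fun h' => hgK (h' ▸ hk)) (h ▸ hwk)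
  rw [(Sym2.mem_and_mem_iff hwb).1 ⟨hwg, hgy.mem⟩] at hvg
  rcases Sym2.mem_iff.1 hvg with rfl | rfl
  · exact ⟨k, Or.inl hk, hwk⟩
  · exact ⟨_, Or.inr ⟨g, ⟨hg, hgK⟩, rfl⟩, Sym2.mem_mk_left _ _⟩

lemma IsPrivateNbr.notMem_edgeVerts_swapMatching {g₀ : Sym2 V} {b₀ y₀ : V}
    (h₀ : IsPrivateNbr G M g₀ b₀ y₀) (hg₀ : g₀ ∈ K) (hKM : K ⊆ M)
    (hby : ∀ g ∈ M \ K, IsPrivateNbr G M g (b g) (y g)) :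
    y₀ ∉ edgeVerts (swapMatching K M b y) := by
  rintro ⟨e, he | ⟨g, hg, rfl⟩, hye⟩
  · exact h₀.notMem_edgeVerts ⟨e, hKM he, hye⟩
  · have hgg : g ≠ g₀ := fun h => hg.2 (h ▸ hg₀)
    rcases Sym2.mem_iff.1 hye with rfl | rfl
    · exact h₀.notMem_edgeVerts ⟨g, hg.1, (hby g hg).mem⟩
    · exact h₀.not_evDom_of_ne g hg.1 hgg (hby g hg).evDom

lemma mem_edgeVerts_swapMatching {g : Sym2 V} (hg : g ∈ M \ K) :
    y g ∈ edgeVerts (swapMatching K M b y) :=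
  ⟨_, Or.inr ⟨g, hg, rfl⟩, Sym2.mem_mk_right _ _⟩

lemma IsMinEvDomSet.isMinPairedDomSet_swapMatching [Finite V] (hM : IsMinEvDomSet G M)
    (hK : Maximal (IsMatchingIn M) K)
    (hby : ∀ g ∈ M \ K, IsPrivateNbr G M g (b g) (y g)) :
    IsMinPairedDomSet G (edgeVerts (swapMatching K M b y)) :=
  hM.isMinPairedDomSet_edgeVerts (swapMatching_subset_edgeSet hM.1.1 hK.1.1 hby)
    (noSharedVertex_swapMatching hK.1.1 hK.1.2 hby) (ncard_swapMatching_le hK.1.1)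
    (edgeVerts_subset_swapMatching hK hby)

end Swap

theorem stmt7_general [Fintype V] (G : SimpleGraph V) (D : Set V)
    (huniq : ∀ D' : Set V, IsMinPairedDomSet G D' → D' = D) :
    ∀ M : Set (Sym2 V), IsMinEvDomSet G M → edgeVerts M = D := by
  intro M hM
  obtain ⟨b, y, hby⟩ := hM.exists_isPrivateNbr_fun
  have hswap : ∀ K, Maximal (IsMatchingIn M) K → edgeVerts (swapMatching K M b y) = D :=
    fun K hK => huniq _ (hM.isMinPairedDomSet_swapMatching hK (hby K hK))
  have hmatch : NoSharedVertex M := by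
    intro g hg h hh hne v hvg hvh
    obtain ⟨K₁, hgK₁, hK₁⟩ := exists_maximal_isMatchingIn_mem hg
    obtain ⟨K₂, hhK₂, hK₂⟩ := exists_maximal_isMatchingIn_mem hh
    have hgK₂ : g ∉ K₂ := fun hgK₂ => hK₂.1.2 g hgK₂ h hhK₂ hne v hvg hvh
    have hyD : y g ∈ D := hswap K₂ hK₂ ▸ mem_edgeVerts_swapMatching ⟨hg, hgK₂⟩
    rw [← hswap K₁ hK₁] at hyD
    exact (hby K₂ hK₂ g ⟨hg, hgK₂⟩).notMem_edgeVerts_swapMatching hgK₁ hK₁.1.1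
      (hby K₁ hK₁) hyD
  exact huniq _ (hM.isMinPairedDomSet_edgeVerts hM.1.1 hmatch le_rfl subset_rfl)

theorem stmt7 [Fintype V] (G : SimpleGraph V) (hG : NoIsolated G) (D : Set V)
    (hD : IsMinPairedDomSet G D)
    (huniq : ∀ D' : Set V, IsMinPairedDomSet G D' → D' = D) :
    ∀ M : Set (Sym2 V), IsMinEvDomSet G M → edgeVerts M = D :=
  stmt7_general G D huniq
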